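/- arXiv:2405.15733 — 3 statements merged into one kernel-verified Lean document; each statement's English description precedes it below -/
import Mathlib

section
/- Let T be a tree with at least one edge, rooted at r, and let P_1 be a set of vertices. Construct P_2 by starting from P_1 ∪ {r} and repeatedly adding any vertex not in P_2 that has at least two children in P_2, until no such vertex exists. Then |P_2| ≤ 2|P_1| + 1. -/
/-- Let `T` be a tree with at least one edge rooted at `r`, with parent function
`parent` (each non-root vertex is adjacent to its parent, which is one step closer to
the root).  If `P₂ ⊇ P₁ ∪ {r}` is obtained from `P₁ ∪ {r}` by repeatedly adding vertices
having at least two children in the current set until no such vertex exists (so that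
every added vertex has at least two children in `P₂`), then `|P₂| ≤ 2|P₁| + 1`. -/
theorem stmt_9 {V : Type*} [Fintype V] [DecidableEq V] (T : SimpleGraph V)
    [DecidableRel T.Adj] (hT : T.IsTree) (hE : 1 ≤ T.edgeFinset.card)
    (r : V) (parent : V → V)
    (hpar : ∀ v : V, v ≠ r →
      T.Adj (parent v) v ∧ T.dist r (parent v) + 1 = T.dist r v)
    (P1 P2 : Finset V) (hsub : P1 ∪ {r} ⊆ P2)
    (hgrow : ∀ p ∈ P2, p ∉ P1 → p ≠ r →
      2 ≤ (P2.filter fun c => c ≠ r ∧ parent c = p).card) :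
    P2.card ≤ 2 * P1.card + 1 := by
  classical
  set A : Finset V := P2.filter (fun p => p ∉ P1 ∧ p ≠ r) with hA
  set C : V → Finset V := fun p => P2.filter (fun c => c ≠ r ∧ parent c = p) with hC
  have hr : r ∈ P2 := hsub (by simp)
  -- disjointness of children sets
  have hdisj : ∀ p ∈ A, ∀ q ∈ A, p ≠ q → Disjoint (C p) (C q) := by
    intro p _ q _ hpq
    simp only [Finset.disjoint_left, hC, Finset.mem_filter]
    rintro c ⟨_, _, h1⟩ ⟨_, _, h2⟩
    exact hpq (h1.symm.trans h2)
  have hbiU : A.biUnion C ⊆ P2.erase r := by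
    intro c hc
    simp only [Finset.mem_biUnion, hC, Finset.mem_filter] at hc
    obtain ⟨p, _, hc2, hcr, _⟩ := hc
    exact Finset.mem_erase.mpr ⟨hcr, hc2⟩
  have hsum : 2 * A.card ≤ (A.biUnion C).card := by
    rw [Finset.card_biUnion hdisj]
    calc 2 * A.card = ∑ _p ∈ A, 2 := by rw [Finset.sum_const, smul_eq_mul, mul_comm]
    _ ≤ ∑ p ∈ A, (C p).card := by
        apply Finset.sum_le_sum
        intro p hp
        simp only [hA, Finset.mem_filter] at hp
        exact hgrow p hp.1 hp.2.1 hp.2.2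
  have h1 : 2 * A.card ≤ (P2.erase r).card :=
    hsum.trans (Finset.card_le_card hbiU)
  have h2 : (P2.erase r).card + 1 = P2.card := Finset.card_erase_add_one hr
  -- P2 splits
  have h3 : P2.card ≤ (P1.card + 1) + A.card := by
    have := Finset.card_filter_add_card_filter_not
      (s := P2) (p := fun p => p ∉ P1 ∧ p ≠ r)
    rw [← hA] at this
    have hsubf : P2.filter (fun p => ¬(p ∉ P1 ∧ p ≠ r)) ⊆ P1 ∪ {r} := by
      intro p hp
      simp only [Finset.mem_filter, not_and_or, not_not] at hp
      rcases hp.2 with h | h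
      · exact Finset.mem_union_left _ h
      · simp [h]
    have hcard : (P2.filter (fun p => ¬(p ∉ P1 ∧ p ≠ r))).card ≤ P1.card + 1 := by
      calc _ ≤ (P1 ∪ {r}).card := Finset.card_le_card hsubf
      _ ≤ P1.card + 1 := by
          simpa using Finset.card_union_le P1 {r}
    omega
  omega
end

section
/- Let G be a graph on n vertices with n ≤ (1+δ)k, δ = 10^{-10}, k ≥ δ^{-2}, such that G contains no subgraph on at least k+1 vertices with minimum degree > 2k/3 and a dominating vertex. If the set S of vertices of degree ≤ 2k/3 + (n-k) has size b, then Δ(G) < k + b. -/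
/-- If `G` has `n ≤ (1+δ)k` vertices (`δ = 10⁻¹⁰`, `k ≥ δ⁻²`) and contains no subgraph
on at least `k+1` vertices with minimum degree `> 2k/3` and a dominating vertex, then,
with `S` the set of vertices of degree at most `2k/3 + (n-k)` and `b = |S|`, every
vertex of `G` has degree less than `k + b`. -/
theorem stmt_14 {V : Type*} [Fintype V] (G : SimpleGraph V) [DecidableRel G.Adj]
    (δ k : ℝ) (hδ : δ = 1e-10) (hk : δ⁻¹ ^ 2 ≤ k)
    (hn : (Fintype.card V : ℝ) ≤ (1 + δ) * k)
    (hno : ¬ ∃ H : G.Subgraph, ((Nat.card H.verts : ℝ) ≥ k + 1) ∧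
      (∀ v ∈ H.verts, (Nat.card (H.neighborSet v) : ℝ) > 2 * k / 3) ∧
      ∃ v ∈ H.verts, ∀ u ∈ H.verts, u ≠ v → H.Adj v u)
    (S : Finset V)
    (hS : ∀ v : V, v ∈ S ↔ (G.degree v : ℝ) ≤ 2 * k / 3 + ((Fintype.card V : ℝ) - k))
    (b : ℝ) (hb : b = S.card) :
    ∀ v : V, (G.degree v : ℝ) < k + b := by
  classical
  intro v
  by_contra h
  push_neg at h
  apply hno
  have hk1 : (1:ℝ) ≤ k := by rw [hδ] at hk; norm_num at hk; linarith
  have hb0 : 0 ≤ b := by rw [hb]; positivity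
  set n : ℝ := (Fintype.card V : ℝ) with hn'
  have hvS : v ∉ S := by
    rw [hS]
    push_neg
    have hδ' : n ≤ (1 + δ) * k := hn
    have : 2 * k / 3 + (n - k) < k := by rw [hδ] at hδ' hk; nlinarith
    linarith
  set A : Finset V := insert v (G.neighborFinset v \ S) with hA
  have hvA : v ∈ A := Finset.mem_insert_self _ _
  have hASdisj : ∀ u ∈ A, u ∉ S := by
    intro u hu
    rcases Finset.mem_insert.mp hu with rfl | hu
    · exact hvS
    · exact (Finset.mem_sdiff.mp hu).2
  have hcardA : k + 1 ≤ (A.card : ℝ) := by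
    have h1 : A.card = (G.neighborFinset v \ S).card + 1 := by
      rw [hA, Finset.card_insert_of_notMem]
      simp
    have h2 : (G.neighborFinset v).card ≤ (G.neighborFinset v \ S).card + S.card :=
      Finset.card_le_card_sdiff_add_card
    have h3 : (G.neighborFinset v).card = G.degree v := G.card_neighborFinset_eq_degree v
    have := h
    rw [hb] at this
    rw [h1]
    push_cast
    rw [h3] at h2
    have h2' : (G.degree v : ℝ) ≤ ((G.neighborFinset v \ S).card : ℝ) + (S.card : ℝ) := by
      exact_mod_cast h2
    linarith
  refine ⟨(⊤ : G.Subgraph).induce ↑A, ?_, ?_, ?_⟩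
  · simp only [SimpleGraph.Subgraph.induce_verts, Nat.card_coe_set_eq,
      Set.ncard_coe_finset]
    exact hcardA
  · intro u hu
    simp only [SimpleGraph.Subgraph.induce_verts, Finset.mem_coe] at hu
    have hdegu : (G.degree u : ℝ) > 2 * k / 3 + (n - k) := by
      by_contra hc
      push_neg at hc
      exact hASdisj u hu ((hS u).mpr hc)
    have hset : ((⊤ : G.Subgraph).induce ↑A).neighborSet u = ↑(A ∩ G.neighborFinset u) := by
      ext w
      simp only [SimpleGraph.Subgraph.mem_neighborSet, SimpleGraph.Subgraph.induce_adj,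
        SimpleGraph.Subgraph.top_adj, Finset.coe_inter, Set.mem_inter_iff, Finset.mem_coe,
        SimpleGraph.mem_neighborFinset]
      tauto
    rw [hset, Nat.card_coe_set_eq, Set.ncard_coe_finset]
    have hiu : (A ∩ G.neighborFinset u).card + (A ∪ G.neighborFinset u).card
        = A.card + (G.neighborFinset u).card := Finset.card_inter_add_card_union _ _
    have hun : (A ∪ G.neighborFinset u).card ≤ Fintype.card V := Finset.card_le_univ _
    have h3 : (G.neighborFinset u).card = G.degree u := G.card_neighborFinset_eq_degree u
    rw [h3] at hiu
    have hiu' : ((A ∩ G.neighborFinset u).card : ℝ) + ((A ∪ G.neighborFinset u).card : ℝ)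
        = (A.card : ℝ) + (G.degree u : ℝ) := by exact_mod_cast hiu
    have hun' : ((A ∪ G.neighborFinset u).card : ℝ) ≤ n := by rw [hn']; exact_mod_cast hun
    linarith
  · refine ⟨v, by simpa using hvA, ?_⟩
    intro u hu hne
    simp only [SimpleGraph.Subgraph.induce_verts, Finset.mem_coe] at hu
    have : u ∈ G.neighborFinset v \ S := by
      rcases Finset.mem_insert.mp hu with rfl | h'
      · exact absurd rfl hne
      · exact h'
    have hadj : G.Adj v u := (SimpleGraph.mem_neighborFinset _ _ _).mp (Finset.mem_sdiff.mp this).1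
    exact ⟨hvA, hu, hadj⟩
end

section
/- Let G' be a graph and let u, v be already-chosen distinct vertices such that every pair of vertices of G' has at least c common neighbours in G', and let W ⊆ V(G') with |W| < c. Then a path x_1 x_2 ... x_m (m ≥ 2) with prescribed distinct images for x_1's parent-endpoint attachment u and x_m's attachment v can be embedded: formally, there exist distinct vertices w_1, ..., w_m in V(G') \ W with u w_1, w_1 w_2, ..., w_{m-1} w_m, w_m v all edges, provided m + |W| + 2 ≤ c. -/
/-! The path is built greedily, and every vertex of it is kept adjacent to `v`: the next vertex
is a common neighbour of the previous one (of `u`, at the start) and of `v`, chosen outside `W`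
and the vertices already used. At most `|W| + m - 1 < c` vertices are excluded at any step, so a
choice always exists, and adjacency of the last vertex to `v` closes the path. -/

open Finset

namespace SimpleGraph

variable {V : Type*} [DecidableEq V] (G : SimpleGraph V) [G.LocallyFinite] {c : ℕ}

theorem exists_adj_adj_notMem_of_card_lt {a b : V} {F : Finset V}
    (hab : c ≤ #(G.neighborFinset a ∩ G.neighborFinset b)) (hF : #F < c) :
    ∃ x, G.Adj a x ∧ G.Adj b x ∧ x ∉ F := by
  obtain ⟨x, hx, hxF⟩ := exists_mem_notMem_of_card_lt_card (hF.trans_le hab)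
  rw [mem_inter, mem_neighborFinset, mem_neighborFinset] at hx
  exact ⟨x, hx.1, hx.2, hxF⟩

theorem exists_path_of_commonNeighbors_card
    (hc : ∀ x y : V, x ≠ y → c ≤ #(G.neighborFinset x ∩ G.neighborFinset y))
    {u v : V} (huv : u ≠ v) (W : Finset V) (n : ℕ) (hn : n + #W < c) :
    ∃ w : ℕ → V, Set.InjOn w (Set.Iic n) ∧ (∀ i ≤ n, w i ∉ W ∧ G.Adj (w i) v) ∧
      G.Adj u (w 0) ∧ ∀ i < n, G.Adj (w i) (w (i + 1)) := by
  induction n with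
  | zero =>
    obtain ⟨x, hux, hvx, hxW⟩ :=
      G.exists_adj_adj_notMem_of_card_lt (F := W) (hc u v huv) (by omega)
    refine ⟨fun _ ↦ x, fun i hi j hj _ ↦ ?_, fun _ _ ↦ ⟨hxW, hvx.symm⟩, hux, by simp⟩
    exact (Nat.le_zero.1 hi).trans (Nat.le_zero.1 hj).symm
  | succ n ih =>
    obtain ⟨w, hinj, hwv, hu, hpath⟩ := ih (by omega)
    have hF : #(W ∪ (range (n + 1)).image w) < c :=
      calc #(W ∪ (range (n + 1)).image w) ≤ #W + (n + 1) :=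
            (card_union_le _ _).trans (by grw [card_image_le, card_range])
        _ < c := by omega
    have hnv : w n ≠ v := (hwv n le_rfl).2.ne
    obtain ⟨x, hnx, hvx, hxF⟩ := G.exists_adj_adj_notMem_of_card_lt (hc _ _ hnv) hF
    rw [mem_union, mem_image, not_or, not_exists] at hxF
    have hfresh : ∀ i ≤ n, w i ≠ x := fun i hi h ↦ hxF.2 i ⟨mem_range.2 (by omega), h⟩
    have hold : ∀ i ≤ n, Function.update w (n + 1) x i = w i :=
      fun i hi ↦ Function.update_of_ne (by omega) _ _
    refine ⟨Function.update w (n + 1) x, ?_, fun i hi ↦ ?_, ?_, fun i hi ↦ ?_⟩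
    · intro i hi j hj h
      rcases Nat.le_succ_iff.1 hi with hi | rfl <;> rcases Nat.le_succ_iff.1 hj with hj | rfl
      · exact hinj hi hj (by rwa [hold i hi, hold j hj] at h)
      · rw [hold i hi, Function.update_self] at h
        exact absurd h (hfresh i hi)
      · rw [hold j hj, Function.update_self] at h
        exact absurd h.symm (hfresh j hj)
      · rfl
    · rcases Nat.le_succ_iff.1 hi with hi | rfl
      · rw [hold i hi]
        exact hwv i hi
      · rw [Function.update_self]
        exact ⟨hxF.1, hvx.symm⟩
    · rwa [hold 0 (by omega)]
    · rcases Nat.lt_succ_iff_lt_or_eq.1 hi with hi | rfl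
      · rw [hold i hi.le, hold (i + 1) hi]
        exact hpath i hi
      · rw [hold i le_rfl, Function.update_self]
        exact hnx

end SimpleGraph

theorem stmt_17_general {V : Type*} [Fintype V] [DecidableEq V] (G' : SimpleGraph V)
    [DecidableRel G'.Adj] (c : ℕ)
    (hc : ∀ x y : V, x ≠ y → c ≤ (G'.neighborFinset x ∩ G'.neighborFinset y).card)
    (u v : V) (huv : u ≠ v) (W : Finset V)
    (m : ℕ) (hmc : m + W.card + 2 ≤ c) :
    ∃ w : ℕ → V,
      (∀ i j : ℕ, i < m → j < m → w i = w j → i = j) ∧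
      (∀ i : ℕ, i < m → w i ∉ W) ∧
      G'.Adj u (w 0) ∧
      (∀ i : ℕ, i + 1 < m → G'.Adj (w i) (w (i + 1))) ∧
      G'.Adj (w (m - 1)) v := by
  obtain ⟨w, hinj, hwv, hu, hpath⟩ :=
    G'.exists_path_of_commonNeighbors_card hc huv W (m - 1) (by omega)
  refine ⟨w, fun i j hi hj h ↦ hinj (Set.mem_Iic.2 ?_) (Set.mem_Iic.2 ?_) h,
    fun i hi ↦ (hwv i (by omega)).1, hu, fun i hi ↦ hpath i (by omega),
    (hwv _ le_rfl).2⟩ <;> omega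

/-- In a graph `G'` where every two distinct vertices have at least `c` common
neighbours, given distinct attachment vertices `u ≠ v`, a forbidden set `W` with
`|W| < c`, and `m ≥ 2` with `m + |W| + 2 ≤ c`, there is a path `u w₁ w₂ … w_m v` with
the `wᵢ` distinct and avoiding `W`. -/
theorem stmt_17 {V : Type*} [Fintype V] [DecidableEq V] (G' : SimpleGraph V)
    [DecidableRel G'.Adj] (c : ℕ)
    (hc : ∀ x y : V, x ≠ y → c ≤ (G'.neighborFinset x ∩ G'.neighborFinset y).card)
    (u v : V) (huv : u ≠ v) (W : Finset V) (hW : W.card < c)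
    (m : ℕ) (hm : 2 ≤ m) (hmc : m + W.card + 2 ≤ c) :
    ∃ w : ℕ → V,
      (∀ i j : ℕ, i < m → j < m → w i = w j → i = j) ∧
      (∀ i : ℕ, i < m → w i ∉ W) ∧
      G'.Adj u (w 0) ∧
      (∀ i : ℕ, i + 1 < m → G'.Adj (w i) (w (i + 1))) ∧
      G'.Adj (w (m - 1)) v :=
  stmt_17_general G' c hc u v huv W m hmc
end
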